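/- arXiv:1309.5712 — 6 statements merged into one kernel-verified Lean document; each statement's English description precedes it below -/
import Mathlib

section
/- If A is a finite nonempty subset of the integers with |A+A| ≤ 2|A|-1, then A is an arithmetic progression. -/
open Pointwise

theorem small_doubling_int_is_ap (A : Finset ℤ) (hA : A.Nonempty)
    (h : (A + A).card ≤ 2 * A.card - 1) :
    ∃ a d : ℤ, A = (Finset.range A.card).image (fun i : ℕ => a + d * (i : ℤ)) := by
  obtain ⟨n, hn⟩ : ∃ n, A.card = n + 1 := ⟨A.card - 1, by have := hA.card_pos; omega⟩
  set e : Fin (n + 1) ↪o ℤ := A.orderEmbOfFin hn with he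
  rcases Nat.eq_zero_or_pos n with rfl | hn1
  · -- singleton case
    obtain ⟨a, ha⟩ := Finset.card_eq_one.mp hn
    refine ⟨a, 0, ?_⟩
    rw [hn, ha]
    simp [Finset.range_one]
  -- main case : n ≥ 1
  set E : ℕ → ℤ := fun k => if hk : k < n + 1 then e ⟨k, hk⟩ else 0 with hE
  have hEmono : ∀ i j : ℕ, i < j → j ≤ n → E i < E j := by
    intro i j hij hj
    simp only [hE]
    rw [dif_pos (by omega), dif_pos (by omega)]
    exact e.strictMono (by simp [Fin.lt_def]; omega)
  have hEle : ∀ i j : ℕ, i ≤ j → j ≤ n → E i ≤ E j := by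
    intro i j hij hj
    rcases eq_or_lt_of_le hij with rfl | hij
    · exact le_refl _
    · exact le_of_lt (hEmono i j hij hj)
  have hEmem : ∀ k : ℕ, k ≤ n → E k ∈ A := by
    intro k hk
    simp only [hE]
    rw [dif_pos (by omega)]
    exact A.orderEmbOfFin_mem hn _
  set a : ℤ := E 0 with ha
  set d : ℤ := E 1 - E 0 with hd
  have hdpos : 0 < d := by have := hEmono 0 1 (by omega) (by omega); omega
  -- the two chains
  set f : Fin (2 * n + 1) → ℤ := fun k => E (k.val / 2) + E ((k.val + 1) / 2) with hf
  set g : Fin (2 * n + 1) → ℤ := fun k =>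
    if k.val < n + 1 then E 0 + E k.val else E (k.val - n) + E n with hg
  have hfmem : ∀ k, f k ∈ A + A := by
    intro k
    have := k.2
    exact Finset.add_mem_add (hEmem _ (by omega)) (hEmem _ (by omega))
  have hgmem : ∀ k, g k ∈ A + A := by
    intro k
    have := k.2
    simp only [hg]
    split_ifs <;>
      exact Finset.add_mem_add (hEmem _ (by omega)) (hEmem _ (by omega))
  have hfmono : StrictMono f := by
    rw [Fin.strictMono_iff_lt_succ]
    intro i
    have hi := i.2
    simp only [hf, Fin.coe_castSucc, Fin.val_succ]
    have hle1 : E (i.val / 2) ≤ E ((i.val + 1) / 2) := hEle _ _ (by omega) (by omega)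
    have hle2 : E ((i.val + 1) / 2) ≤ E ((i.val + 1 + 1) / 2) := hEle _ _ (by omega) (by omega)
    have hcase : i.val / 2 < (i.val + 1) / 2 ∨ (i.val + 1) / 2 < (i.val + 1 + 1) / 2 := by omega
    rcases hcase with hc | hc
    · have := hEmono _ _ hc (by omega); omega
    · have := hEmono _ _ hc (by omega); omega
  have hgmono : StrictMono g := by
    rw [Fin.strictMono_iff_lt_succ]
    intro i
    have hi := i.2
    simp only [hg, Fin.coe_castSucc, Fin.val_succ]
    rcases lt_trichotomy (i.val + 1) (n + 1) with hc | hc | hc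
    · rw [if_pos (by omega), if_pos hc]
      have := hEmono i.val (i.val + 1) (by omega) (by omega)
      omega
    · rw [if_pos (by omega), if_neg (by omega)]
      have h1 : i.val = n := by omega
      rw [h1]
      have h2 : n + 1 - n = 1 := by omega
      rw [h2]
      have := hEmono 0 1 (by omega) (by omega)
      omega
    · rw [if_neg (by omega), if_neg (by omega)]
      have h2 : i.val + 1 - n = (i.val - n) + 1 := by omega
      rw [h2]
      have := hEmono (i.val - n) (i.val - n + 1) (by omega) (by omega)
      omega
  have hAAcard : (A + A).card = 2 * n + 1 := by
    have hle : (A + A).card ≤ 2 * n + 1 := by rw [hn] at h; omega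
    have hge : 2 * n + 1 ≤ (A + A).card := by
      have := Finset.card_le_card_of_injOn (s := (Finset.univ : Finset (Fin (2 * n + 1)))) f
        (fun k _ => hfmem k) hfmono.injective.injOn
      simpa using this
    omega
  have hfeq : f = (A + A).orderEmbOfFin hAAcard := Finset.orderEmbOfFin_unique hAAcard hfmem hfmono
  have hgeq : g = (A + A).orderEmbOfFin hAAcard := Finset.orderEmbOfFin_unique hAAcard hgmem hgmono
  have hfg : ∀ k, f k = g k := by rw [hfeq, hgeq]; exact fun _ => rfl
  -- key : E k = a + k * d for k ≤ n
  have key : ∀ k : ℕ, k ≤ n → E k = a + (k : ℤ) * d := by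
    intro k
    induction k using Nat.strong_induction_on with
    | _ k ih =>
      intro hk
      match k, hk with
      | 0, hk => simp [ha]
      | 1, hk => push_cast; rw [hd]; ring
      | (m + 2), hk =>
        set k := m + 2 with hkdef
        have hlt : k < 2 * n + 1 := by omega
        have h1 := hfg ⟨k, hlt⟩
        simp only [hf, hg, Fin.val_mk] at h1
        rw [if_pos (show k < n + 1 by omega)] at h1
        rw [ih (k / 2) (by omega) (by omega), ih ((k + 1) / 2) (by omega) (by omega)] at h1
        have hsum : ((k / 2 : ℕ) : ℤ) + (((k + 1) / 2 : ℕ) : ℤ) = (k : ℤ) := by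
          have hs : k / 2 + (k + 1) / 2 = k := by omega
          exact_mod_cast congrArg (Nat.cast : ℕ → ℤ) hs
        have : E k = a + (((k / 2 : ℕ) : ℤ) + (((k + 1) / 2 : ℕ) : ℤ)) * d := by
          linear_combination -h1
        rw [hsum] at this
        exact this
  refine ⟨a, d, ?_⟩
  rw [hn]
  symm
  apply Finset.eq_of_subset_of_card_le
  · intro x hx
    simp only [Finset.mem_image, Finset.mem_range] at hx
    obtain ⟨i, hi, rfl⟩ := hx
    have hki := key i (by omega)
    rw [mul_comm] at hki
    rw [← hki]
    exact hEmem _ (by omega)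
  · rw [Finset.card_image_of_injOn, Finset.card_range, hn]
    intro x hx y hy hxy
    simp only [add_right_inj] at hxy
    have : (x : ℤ) = y := mul_left_cancel₀ (ne_of_gt hdpos) hxy
    exact_mod_cast this
end

section
/- Let A and B be nonempty subsets of a finite abelian group G with |A| ≥ |B|, |A+B| < (3/2)|A|, and |B| > (3/4)|A|. Then there is a subgroup H of G with |H| < (3/2)|A| such that A+B lies in a single coset of H. -/
/-!
For `g = v - u ∈ B - B` the translates `u + A` and `v + A` both lie in `A + B`, so
`A ∩ (g + A)` has at least `2|A| - |A + B| > |A|/2` elements. Hence `A - A = B - B`, and for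
`g₁, g₂ ∈ B - B` the sets `A ∩ (gᵢ + A)` meet, which puts `g₁ - g₂` in `A - A`: so `H = B - B`
is a subgroup, and `A + B` lies in a coset `c + H`.

If `A + B` missed a point `s` of `c + H`, then for every missing point `t` the sets `B`,
`s - A`, `t - A` lie in a single coset of `H`, with `B` disjoint from the other two, so
`|A ∩ (t - s + A)| ≥ 2|A| + |B| - |H|`. Summing these bounds and the previous ones over `H`,
where the overlaps `|A ∩ (g + A)|` add up to `|A|²`, is numerically impossible. So `A + B` is the
whole coset and `|H| = |A + B| < 3|A|/2`.
-/

open Pointwise Finset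

/-- Here `a = |A|`, `b = |B|`, `m = |A + B|` and `m + q = |H|`. Writing `d = m - a`, the two
bounds read `q (a - d) ≤ d²` and `q (a + b - d - q) ≤ d²`: the first forces `q < d`, and the
second then fails for `b - d ≤ q < d`. -/
lemma Nat.lt_add_of_sumset_overlap_bounds {a b m q : ℕ} (h34 : 3 * a < 4 * b)
    (h32 : 2 * m < 3 * a) (hpair : (m + q) * (2 * a) ≤ a * a + (m + q) * m)
    (hhole : q * (2 * a + b) + m * (2 * a) ≤ a * a + q * (m + q) + m * m) :
    m + q < a + b := by
  by_contra! hx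
  have hq : q + a < m := by nlinarith
  zify at *
  nlinarith [mul_nonneg (by linarith : (0 : ℤ) ≤ m + q - a - b) (by linarith : (0 : ℤ) ≤ m - a - q)]

lemma Finset.card_mul_le_card_mul_add_sum {ι : Type*} {s : Finset ι} {f : ι → ℕ} {n k : ℕ}
    (h : ∀ i ∈ s, n ≤ k + f i) : #s * n ≤ #s * k + ∑ i ∈ s, f i := by
  simpa [sum_add_distrib] using card_nsmul_le_sum s (fun i ↦ k + f i) n h

namespace Finset

variable {G : Type*} [AddCommGroup G] [DecidableEq G] {A B D E S T : Finset G}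
  {a₀ b₀ c g s t u v : G}

lemma addConvolution_comm (A B : Finset G) : A.addConvolution B = B.addConvolution A :=
  funext fun _ ↦ card_equiv (Equiv.prodComm _ _) (by simp [add_comm, and_comm])

lemma sum_addConvolution_of_add_subset (h : A + B ⊆ D) :
    ∑ x ∈ D, A.addConvolution B x = #A * #B := by
  rw [← card_product, card_eq_sum_card_fiberwise (f := fun ab ↦ ab.1 + ab.2)]
  · rfl
  · rintro ⟨a, b⟩ hab
    rw [mem_coe, mem_product] at hab
    exact h (add_mem_add hab.1 hab.2)

lemma card_vadd_union_vadd_add_addConvolution (S : Finset G) (u v : G) :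
    #((u +ᵥ S) ∪ (v +ᵥ S)) + S.addConvolution (-S) (v - u) = 2 * #S := by
  rw [← neg_add_eq_sub, ← card_vadd_inter_vadd, card_union_add_card_inter, card_vadd_finset,
    card_vadd_finset, two_mul]

lemma two_mul_card_le_card_add_add_addConvolution (hg : g ∈ T - T) :
    2 * #S ≤ #(T + S) + S.addConvolution (-S) g := by
  obtain ⟨v, hv, u, hu, rfl⟩ := mem_sub.1 hg
  rw [← card_vadd_union_vadd_add_addConvolution]
  gcongr
  exact union_subset (vadd_finset_subset_add hu) (vadd_finset_subset_add hv)

lemma sub_subset_sub_of_card_add_lt_two_mul (h : #(T + S) < 2 * #S) : T - T ⊆ S - S := by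
  intro g hg
  have := two_mul_card_le_card_add_add_addConvolution (S := S) hg
  rw [sub_eq_add_neg S, ← addConvolution_pos]
  omega

lemma sub_mem_sub_of_card_lt_addConvolution_add_addConvolution
    (h : #S < S.addConvolution (-S) u + S.addConvolution (-S) v) : u - v ∈ S - S := by
  rw [← card_inter_vadd, ← card_inter_vadd] at h
  obtain ⟨p, hp⟩ := inter_nonempty_of_card_lt_card_add_card inter_subset_left inter_subset_left h
  simp only [mem_inter, mem_vadd_finset, vadd_eq_add] at hp
  obtain ⟨⟨-, q, hq, rfl⟩, -, r, hr, hqr⟩ := hp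
  exact mem_sub.2 ⟨r, hr, q, hq, by rw [sub_eq_sub_iff_add_eq_add, add_comm, hqr]⟩

lemma disjoint_vadd_neg_of_notMem_add (hs : s ∉ A + B) : Disjoint B (s +ᵥ -A) := by
  refine disjoint_left.2 fun p hp hpA ↦ hs ?_
  obtain ⟨_, hq', rfl⟩ := mem_vadd_finset.1 hpA
  obtain ⟨q, hq, rfl⟩ := mem_neg.1 hq'
  convert add_mem_add hq hp using 1
  rw [vadd_eq_add]
  abel

lemma two_mul_card_add_card_le_of_notMem_add (hs : s ∉ A + B) (ht : t ∉ A + B)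
    (hE : B ∪ ((s +ᵥ -A) ∪ (t +ᵥ -A)) ⊆ E) :
    2 * #A + #B ≤ #E + A.addConvolution (-A) (t - s) := by
  have hunion := card_vadd_union_vadd_add_addConvolution (-A) s t
  rw [neg_neg, card_neg, addConvolution_comm] at hunion
  have hdisj := disjoint_union_right.2
    ⟨disjoint_vadd_neg_of_notMem_add hs, disjoint_vadd_neg_of_notMem_add ht⟩
  have := card_le_card hE
  rw [card_union_of_disjoint hdisj] at this
  omega

lemma neg_mem_sub_self (hg : g ∈ S - S) : -g ∈ S - S := by
  obtain ⟨p, hp, q, hq, rfl⟩ := mem_sub.1 hg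
  rw [neg_sub]
  exact sub_mem_sub hq hp

lemma sub_eq_sub_of_two_mul_card_add_lt (h1 : 2 * #(A + B) < 3 * #A) (h2 : 3 * #A < 4 * #B) :
    A - A = B - B :=
  (sub_subset_sub_of_card_add_lt_two_mul (by omega)).antisymm
    (sub_subset_sub_of_card_add_lt_two_mul (by rw [add_comm]; omega))

lemma sub_mem_sub_self_of_two_mul_card_add_lt (h1 : 2 * #(A + B) < 3 * #A)
    (h2 : 3 * #A < 4 * #B) (hu : u ∈ B - B) (hv : v ∈ B - B) : u - v ∈ B - B := by
  rw [← sub_eq_sub_of_two_mul_card_add_lt h1 h2]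
  have hu' := two_mul_card_le_card_add_add_addConvolution (S := A) hu
  have hv' := two_mul_card_le_card_add_add_addConvolution (S := A) hv
  rw [add_comm B A] at hu' hv'
  exact sub_mem_sub_of_card_lt_addConvolution_add_addConvolution (by omega)

lemma add_mem_sub_self_of_two_mul_card_add_lt (h1 : 2 * #(A + B) < 3 * #A)
    (h2 : 3 * #A < 4 * #B) (hu : u ∈ B - B) (hv : v ∈ B - B) : u + v ∈ B - B := by
  simpa using sub_mem_sub_self_of_two_mul_card_add_lt h1 h2 hu (neg_mem_sub_self hv)

lemma add_subset_vadd_sub_of_two_mul_card_add_lt (h1 : 2 * #(A + B) < 3 * #A)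
    (h2 : 3 * #A < 4 * #B) (ha₀ : a₀ ∈ A) (hb₀ : b₀ ∈ B) :
    A + B ⊆ (a₀ + b₀) +ᵥ (B - B) := by
  intro z hz
  obtain ⟨p, hp, q, hq, rfl⟩ := mem_add.1 hz
  rw [← neg_vadd_mem_iff, vadd_eq_add, show -(a₀ + b₀) + (p + q) = (p - a₀) + (q - b₀) by abel]
  refine add_mem_sub_self_of_two_mul_card_add_lt h1 h2 ?_ (sub_mem_sub hq hb₀)
  rw [← sub_eq_sub_of_two_mul_card_add_lt h1 h2]
  exact sub_mem_sub hp ha₀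

lemma union_vadd_neg_subset_of_two_mul_card_add_lt (h1 : 2 * #(A + B) < 3 * #A)
    (h2 : 3 * #A < 4 * #B) (ha₀ : a₀ ∈ A) (hb₀ : b₀ ∈ B) (hs : s ∈ (a₀ + b₀) +ᵥ (B - B)) :
    B ∪ (s +ᵥ -A) ⊆ b₀ +ᵥ (B - B) := by
  rw [← neg_vadd_mem_iff, vadd_eq_add] at hs
  refine union_subset (fun q hq ↦ ?_) (fun z hz ↦ ?_)
  · rw [← neg_vadd_mem_iff, vadd_eq_add, neg_add_eq_sub]
    exact sub_mem_sub hq hb₀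
  · obtain ⟨_, hp', rfl⟩ := mem_vadd_finset.1 hz
    obtain ⟨p, hp, rfl⟩ := mem_neg.1 hp'
    rw [← neg_vadd_mem_iff, vadd_eq_add, vadd_eq_add,
      show -b₀ + (s + -p) = (-(a₀ + b₀) + s) - (p - a₀) by abel]
    refine sub_mem_sub_self_of_two_mul_card_add_lt h1 h2 hs ?_
    rw [← sub_eq_sub_of_two_mul_card_add_lt h1 h2]
    exact sub_mem_sub hp ha₀

lemma neg_vadd_subset_sub_of_two_mul_card_add_lt (h1 : 2 * #(A + B) < 3 * #A)
    (h2 : 3 * #A < 4 * #B) (hs : s ∈ c +ᵥ (B - B)) : -s +ᵥ (c +ᵥ (B - B)) ⊆ B - B := by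
  intro g hg
  obtain ⟨_, ht, rfl⟩ := mem_vadd_finset.1 hg
  obtain ⟨u, hu, rfl⟩ := mem_vadd_finset.1 ht
  obtain ⟨v, hv, rfl⟩ := mem_vadd_finset.1 hs
  convert sub_mem_sub_self_of_two_mul_card_add_lt h1 h2 hu hv using 1
  simp only [vadd_eq_add]
  abel

lemma two_mul_card_add_card_le_card_sub_add_addConvolution (h1 : 2 * #(A + B) < 3 * #A)
    (h2 : 3 * #A < 4 * #B) (ha₀ : a₀ ∈ A) (hb₀ : b₀ ∈ B)
    (hs : s ∈ ((a₀ + b₀) +ᵥ (B - B)) \ (A + B)) (ht : t ∈ ((a₀ + b₀) +ᵥ (B - B)) \ (A + B)) :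
    2 * #A + #B ≤ #(B - B) + A.addConvolution (-A) (t - s) := by
  rw [mem_sdiff] at hs ht
  have hsE := union_vadd_neg_subset_of_two_mul_card_add_lt h1 h2 ha₀ hb₀ hs.1
  have htE := union_vadd_neg_subset_of_two_mul_card_add_lt h1 h2 ha₀ hb₀ ht.1
  have := two_mul_card_add_card_le_of_notMem_add hs.2 ht.2 (union_subset_iff.2
    ⟨hsE.trans' subset_union_left,
      union_subset (hsE.trans' subset_union_right) (htE.trans' subset_union_right)⟩)
  rwa [card_vadd_finset] at this

theorem vadd_sub_eq_add_of_two_mul_card_add_lt (h1 : 2 * #(A + B) < 3 * #A)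
    (h2 : 3 * #A < 4 * #B) (ha₀ : a₀ ∈ A) (hb₀ : b₀ ∈ B) :
    (a₀ + b₀) +ᵥ (B - B) = A + B := by
  set C := (a₀ + b₀) +ᵥ (B - B)
  have hAB : A + B ⊆ C := add_subset_vadd_sub_of_two_mul_card_add_lt h1 h2 ha₀ hb₀
  refine Subset.antisymm (fun s hsC ↦ ?_) hAB
  by_contra hs
  have hs' : s ∈ C \ (A + B) := mem_sdiff.2 ⟨hsC, hs⟩
  set Q := -s +ᵥ (C \ (A + B))
  have hQ : Q ⊆ B - B :=
    (vadd_finset_subset_vadd_finset sdiff_subset).trans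
      (neg_vadd_subset_sub_of_two_mul_card_add_lt h1 h2 hsC)
  have hQcard : #Q + #(A + B) = #(B - B) := by
    rw [card_vadd_finset, card_sdiff_add_card_eq_card hAB, card_vadd_finset]
  have hhole : ∀ g ∈ Q, 2 * #A + #B ≤ #(B - B) + A.addConvolution (-A) g := by
    intro g hg
    obtain ⟨t, ht, rfl⟩ := mem_vadd_finset.1 hg
    rw [vadd_eq_add, neg_add_eq_sub]
    exact two_mul_card_add_card_le_card_sub_add_addConvolution h1 h2 ha₀ hb₀ hs' ht
  have hpair : ∀ g ∈ B - B, 2 * #A ≤ #(A + B) + A.addConvolution (-A) g := fun g hg ↦ by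
    simpa [add_comm B A] using two_mul_card_le_card_add_add_addConvolution (S := A) hg
  have hsum : ∑ g ∈ B - B, A.addConvolution (-A) g = #A * #A := by
    rw [sum_addConvolution_of_add_subset (by rw [← sub_eq_add_neg,
      sub_eq_sub_of_two_mul_card_add_lt h1 h2]), card_neg]
  -- the hole bound at `t = s`
  have hx := hhole 0 (by simpa using vadd_mem_vadd_finset (a := -s) hs')
  rw [← card_inter_vadd, zero_vadd, inter_self] at hx
  have hpair_sum := card_mul_le_card_mul_add_sum hpair
  have hhole_sum := card_mul_le_card_mul_add_sum hhole
  have hrest_sum := card_mul_le_card_mul_add_sum (s := (B - B) \ Q)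
    fun g hg ↦ hpair g (sdiff_subset hg)
  have hsplit := sum_sdiff (f := fun g ↦ A.addConvolution (-A) g) hQ
  have hRcard : #((B - B) \ Q) = #(A + B) := by
    have := card_sdiff_add_card_eq_card hQ
    omega
  rw [hRcard] at hrest_sum
  rw [← hQcard] at hpair_sum hhole_sum hx
  have := Nat.lt_add_of_sumset_overlap_bounds h2 h1 (q := #Q) (by linarith) (by linarith)
  omega

end Finset

theorem sumset_in_coset_large_sets_general {G : Type*} [AddCommGroup G] [DecidableEq G]
    (A B : Finset G) (hA : A.Nonempty) (hB : B.Nonempty)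
    (h1 : 2 * (A + B).card < 3 * A.card)
    (h2 : 3 * A.card < 4 * B.card) :
    ∃ (H : AddSubgroup G) (x : G), 2 * Nat.card H < 3 * A.card ∧
      ∀ z ∈ A + B, z - x ∈ H := by
  obtain ⟨a₀, ha₀⟩ := hA
  obtain ⟨b₀, hb₀⟩ := hB
  let H : AddSubgroup G := .ofSub (B - B : Finset G) ⟨b₀ - b₀, sub_mem_sub hb₀ hb₀⟩
    fun _ hu _ hv ↦ by
      rw [← sub_eq_add_neg]
      exact sub_mem_sub_self_of_two_mul_card_add_lt h1 h2 hu hv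
  have hcoset := vadd_sub_eq_add_of_two_mul_card_add_lt h1 h2 ha₀ hb₀
  refine ⟨H, a₀ + b₀, ?_, fun z hz ↦ ?_⟩
  · have hH : Nat.card H = #(B - B) := (Nat.card_coe_set_eq _).trans (Set.ncard_coe_finset _)
    rwa [hH, ← card_vadd_finset (a₀ + b₀), hcoset]
  · rwa [← hcoset, ← neg_vadd_mem_iff, vadd_eq_add, neg_add_eq_sub] at hz

theorem sumset_in_coset_large_sets {G : Type*} [AddCommGroup G] [Fintype G] [DecidableEq G]
    (A B : Finset G) (hA : A.Nonempty) (hB : B.Nonempty)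
    (hAB : B.card ≤ A.card)
    (h1 : 2 * (A + B).card < 3 * A.card)
    (h2 : 3 * A.card < 4 * B.card) :
    ∃ (H : AddSubgroup G) (x : G), 2 * Nat.card H < 3 * A.card ∧
      ∀ z ∈ A + B, z - x ∈ H :=
  sumset_in_coset_large_sets_general A B hA hB h1 h2
end

section
/- Let A and B be finite nonempty subsets of an abelian group G with |A+B| < 2|B| and |B| < (3/4)|A|. Then A+B lies in a single coset of some subgroup H of G with |H| < 2|B|. -/
/-!
Each translate `b + A` with `b ∈ B` lies in `A + B`, so for every `t ∈ B - B` the set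
`A ∩ (t + A)` has at least `2|A| - |A + B| > |A| / 2` elements; and any two translates `a + B`,
`a' + B` with `a, a' ∈ A` meet, so `A - A ⊆ B - B`. For `x, y ∈ B - B` the sets `A ∩ (x + A)` and
`A ∩ (-y + A)` therefore meet in some `a`, and `x + y = (a + y) - (a - x) ∈ A - A ⊆ B - B`: thus
`H = B - B` is a subgroup, and `A + B` lies in a coset of it. If `A + B` were not the whole coset,
every `z ∈ A + B` would miss some `z + t`, `t ∈ H`, which leaves `z` at most `|A + B| - |A|`
representations as `a + b`; summing over `z` contradicts the size bounds. Hence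
`|H| ≤ |A + B| < 2|B|`.
-/

open Pointwise

namespace Finset

variable {G : Type*} [AddCommGroup G] [DecidableEq G] {A B : Finset G} {t x y z : G}

lemma neg_mem_sub_self_s5 (ht : t ∈ B - B) : -t ∈ B - B := by
  obtain ⟨b, hb, b', hb', rfl⟩ := mem_sub.1 ht
  simpa using sub_mem_sub hb' hb

lemma two_mul_card_le_card_add_add_card_inter_vadd (ht : t ∈ B - B) :
    2 * #A ≤ #(A + B) + #(A ∩ (t +ᵥ A)) := by
  obtain ⟨b, hb, b', hb', rfl⟩ := mem_sub.1 ht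
  have htranslate : b' +ᵥ (A ∩ ((b - b') +ᵥ A)) = (b' +ᵥ A) ∩ (b +ᵥ A) := by
    rw [vadd_finset_inter, vadd_vadd, add_sub_cancel]
  have hunion : #((b' +ᵥ A) ∪ (b +ᵥ A)) ≤ #(A + B) := by
    rw [add_comm A]
    exact card_le_card (union_subset (vadd_finset_subset_add hb') (vadd_finset_subset_add hb))
  have := card_union_add_card_inter (b' +ᵥ A) (b +ᵥ A)
  rw [← htranslate, card_vadd_finset, card_vadd_finset, card_vadd_finset] at this
  omega

lemma sub_subset_sub_of_card_add_lt (h : #(A + B) < 2 * #B) : A - A ⊆ B - B := by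
  intro d hd
  obtain ⟨a, ha, a', ha', rfl⟩ := mem_sub.1 hd
  obtain ⟨u, hu⟩ : ((a +ᵥ B) ∩ (a' +ᵥ B)).Nonempty :=
    inter_nonempty_of_card_lt_card_add_card (vadd_finset_subset_add ha)
      (vadd_finset_subset_add ha') (by rwa [card_vadd_finset, card_vadd_finset, ← two_mul])
  simp only [mem_inter, mem_vadd_finset, vadd_eq_add] at hu
  obtain ⟨⟨b, hb, rfl⟩, b', hb', hb'u⟩ := hu
  convert sub_mem_sub hb' hb using 1
  rw [sub_eq_sub_iff_add_eq_add, add_comm b', hb'u]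

lemma add_mem_sub_self_of_card_add_lt (h₁ : #(A + B) < 2 * #B) (h₂ : 2 * #(A + B) < 3 * #A)
    (hx : x ∈ B - B) (hy : y ∈ B - B) : x + y ∈ B - B := by
  have hX := two_mul_card_le_card_add_add_card_inter_vadd (A := A) hx
  have hY := two_mul_card_le_card_add_add_card_inter_vadd (A := A) (neg_mem_sub_self_s5 hy)
  obtain ⟨a, ha⟩ := inter_nonempty_of_card_lt_card_add_card
    (inter_subset_left : A ∩ (x +ᵥ A) ⊆ A) (inter_subset_left : A ∩ (-y +ᵥ A) ⊆ A) (by omega)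
  simp only [mem_inter, mem_vadd_finset, vadd_eq_add] at ha
  obtain ⟨⟨-, c, hc, rfl⟩, -, c', hc', hc'c⟩ := ha
  convert sub_subset_sub_of_card_add_lt h₁ (sub_mem_sub hc' hc) using 1
  rw [show c' = y + (x + c) by rw [← hc'c]; abel]
  abel

lemma sum_addConvolution (A B : Finset G) :
    ∑ z ∈ A + B, A.addConvolution B z = #A * #B := by
  rw [← card_product]
  exact (card_eq_sum_card_fiberwise fun p hp ↦
    add_mem_add (mem_product.1 hp).1 (mem_product.1 hp).2).symm

lemma addConvolution_add_card_le (ht : t ∈ B - B) (hzt : z + t ∉ A + B) :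
    A.addConvolution B z + #A ≤ #(A + B) := by
  have hsub : A ∩ (z +ᵥ -B) ⊆ A \ (-t +ᵥ A) := by
    intro a ha
    simp only [mem_inter, mem_sdiff, mem_vadd_finset, mem_neg, vadd_eq_add] at ha ⊢
    obtain ⟨haA, _, ⟨b, hb, rfl⟩, rfl⟩ := ha
    refine ⟨haA, fun ⟨a', ha', h⟩ ↦ hzt ?_⟩
    convert add_mem_add ha' hb using 1
    rw [show a' = z + -b + t by rw [← h]; abel]
    abel
  have hcard := card_le_card hsub
  rw [card_inter_vadd_neg] at hcard
  have := card_sdiff_add_card_inter A (-t +ᵥ A)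
  have := two_mul_card_le_card_add_add_card_inter_vadd (A := A) (neg_mem_sub_self_s5 ht)
  omega

lemma card_sub_self_le_card_add (h₁ : #(A + B) < 2 * #B) (h₂ : 2 * #(A + B) < 3 * #A) :
    #(B - B) ≤ #(A + B) := by
  suffices ∃ z ∈ A + B, ∀ t ∈ B - B, z + t ∈ A + B by
    obtain ⟨z, -, hz⟩ := this
    rw [← card_vadd_finset z]
    exact card_le_card fun w hw ↦ by
      obtain ⟨t, ht, rfl⟩ := mem_vadd_finset.1 hw
      exact hz t ht
  by_contra! hmiss
  have hle : ∑ z ∈ A + B, (A.addConvolution B z + #A) ≤ ∑ _z ∈ A + B, #(A + B) :=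
    sum_le_sum fun z hz ↦
      let ⟨t, ht, hzt⟩ := hmiss z hz
      addConvolution_add_card_le ht hzt
  rw [sum_add_distrib, sum_addConvolution, sum_const, sum_const, smul_eq_mul, smul_eq_mul] at hle
  nlinarith

def subSelfAddSubgroup (B : Finset G) (hB : B.Nonempty)
    (hadd : ∀ x ∈ B - B, ∀ y ∈ B - B, x + y ∈ B - B) : AddSubgroup G where
  carrier := ((B - B : Finset G) : Set G)
  zero_mem' := by
    obtain ⟨b, hb⟩ := hB
    simpa using sub_mem_sub hb hb
  add_mem' hx hy := hadd _ hx _ hy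
  neg_mem' := neg_mem_sub_self_s5

end Finset

open Finset

theorem sumset_in_coset_small_B {G : Type*} [AddCommGroup G] [DecidableEq G]
    (A B : Finset G) (hA : A.Nonempty) (hB : B.Nonempty)
    (h1 : (A + B).card < 2 * B.card)
    (h2 : 4 * B.card < 3 * A.card) :
    ∃ (H : AddSubgroup G) (x : G), (H : Set G).Finite ∧ Nat.card H < 2 * B.card ∧
      ∀ z ∈ A + B, z - x ∈ H := by
  have h2' : 2 * #(A + B) < 3 * #A := by omega
  let H := B.subSelfAddSubgroup hB fun _ hx _ hy ↦ add_mem_sub_self_of_card_add_lt h1 h2' hx hy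
  obtain ⟨a₀, ha₀⟩ := hA
  obtain ⟨b₀, hb₀⟩ := hB
  refine ⟨H, a₀ + b₀, (B - B).finite_toSet, ?_, ?_⟩
  · calc Nat.card H = #(B - B) := (Nat.card_coe_set_eq _).trans (Set.ncard_coe_finset _)
      _ ≤ #(A + B) := card_sub_self_le_card_add h1 h2'
      _ < 2 * #B := h1
  · intro z hz
    obtain ⟨a, ha, b, hb, rfl⟩ := mem_add.1 hz
    rw [add_sub_add_comm]
    exact H.add_mem (sub_subset_sub_of_card_add_lt h1 (sub_mem_sub ha ha₀)) (sub_mem_sub hb hb₀)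
end

section
/- Let N ≥ 2 and let A be a subset of the integer interval [0, N-1] with |A| ≥ 2N/3 + 1. Then for every positive integer d < |A| there exist elements g1, g2 ∈ A with d = g1 - g2. -/
open Pointwise

theorem diff_in_dense_set (N : ℕ) (hN : 2 ≤ N) (A : Finset ℤ)
    (hsub : A ⊆ Finset.Icc 0 ((N : ℤ) - 1))
    (hcard : 2 * N + 3 ≤ 3 * A.card) :
    ∀ d : ℤ, 0 < d → d < A.card → ∃ g1 ∈ A, ∃ g2 ∈ A, d = g1 - g2 := by
  intro d hd hdA
  by_contra hcon
  push_neg at hcon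
  have hbound : ∀ a ∈ A, 0 ≤ a ∧ a ≤ (N : ℤ) - 1 := by
    intro a ha
    have := hsub ha
    simpa [Finset.mem_Icc] using this
  by_cases hcase : (N : ℤ) ≤ 2 * d
  · -- injection a ↦ if a < d then a else a - d into [0, d-1]
    have hmap : ∀ a ∈ A, (if a < d then a else a - d) ∈ Finset.Icc (0 : ℤ) (d - 1) := by
      intro a ha
      obtain ⟨h0, h1⟩ := hbound a ha
      by_cases h : a < d <;> simp [h, Finset.mem_Icc] <;> omega
    have hinj : Set.InjOn (fun a => if a < d then a else a - d) A := by
      intro a ha b hb hab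
      simp only at hab
      by_cases h1 : a < d <;> by_cases h2 : b < d <;>
        simp only [if_pos, if_neg, h1, h2, if_true, if_false] at hab
      · exact hab
      · exact absurd (by omega : d = b - a) (hcon b hb a ha)
      · exact absurd (by omega : d = a - b) (hcon a ha b hb)
      · omega
    have hle := Finset.card_le_card_of_injOn _ hmap hinj
    rw [Int.card_Icc] at hle
    omega
  · -- 2d < N : use translates B = A + d, C = A + 2d
    set B := A.image (· + d) with hBdef
    set C := A.image (· + 2 * d) with hCdef
    have hBcard : B.card = A.card := Finset.card_image_of_injective _ (add_left_injective d)
    have hCcard : C.card = A.card := Finset.card_image_of_injective _ (add_left_injective (2 * d))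
    have hAB : Disjoint A B := by
      rw [Finset.disjoint_left]
      intro x hx hxB
      obtain ⟨a, ha, rfl⟩ := Finset.mem_image.mp hxB
      exact hcon (a + d) hx a ha (by ring)
    have hBC : Disjoint B C := by
      rw [Finset.disjoint_left]
      intro x hxB hxC
      obtain ⟨a, ha, rfl⟩ := Finset.mem_image.mp hxB
      obtain ⟨b, hb, hab⟩ := Finset.mem_image.mp hxC
      exact hcon a ha b hb (by omega)
    have h1 : (A ∪ B ∪ C).card + ((A ∪ B) ∩ C).card = (A ∪ B).card + C.card :=
      Finset.card_union_add_card_inter _ _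
    have h2 : (A ∪ B).card = A.card + B.card := Finset.card_union_of_disjoint hAB
    have h3 : ((A ∪ B) ∩ C) ⊆ A ∩ C := by
      intro x hx
      rw [Finset.mem_inter, Finset.mem_union] at hx
      rcases hx with ⟨hAB' | hB, hC⟩
      · exact Finset.mem_inter.mpr ⟨hAB', hC⟩
      · exact absurd hC (Finset.disjoint_left.mp hBC hB)
    have h3' : ((A ∪ B) ∩ C).card ≤ (A ∩ C).card := Finset.card_le_card h3
    have h4 : (A ∪ B ∪ C) ⊆ Finset.Icc (0 : ℤ) ((N : ℤ) - 1 + 2 * d) := by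
      intro x hx
      rw [Finset.mem_union, Finset.mem_union] at hx
      rw [Finset.mem_Icc]
      rcases hx with (hx | hx) | hx
      · have := hbound x hx; omega
      · obtain ⟨a, ha, rfl⟩ := Finset.mem_image.mp hx
        have := hbound a ha; omega
      · obtain ⟨a, ha, rfl⟩ := Finset.mem_image.mp hx
        have := hbound a ha; omega
    have h5 : (A ∩ C) ⊆ Finset.Icc (2 * d) ((N : ℤ) - 1) := by
      intro x hx
      rw [Finset.mem_inter] at hx
      obtain ⟨hxA, hxC⟩ := hx
      obtain ⟨a, ha, rfl⟩ := Finset.mem_image.mp hxC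
      have h6 := hbound a ha
      have h7 := hbound _ hxA
      rw [Finset.mem_Icc]
      omega
    have h4' := Finset.card_le_card h4
    have h5' := Finset.card_le_card h5
    rw [Int.card_Icc] at h4' h5'
    omega
end

section
/- Let s > 3 and let A be a subset of the integer interval [0, s-1] with |A| ≥ 2s/3 + 1. Then there exist two consecutive elements a_i, a_j ∈ A with a_j - a_i = 1 such that the closure G^good of G = {a_i, a_j} equals A. -/
/-- One step of the closure: elements `d` of `A` of the form `b + c - a` with `a, b, c ∈ S`. -/
def goodStep (A S : Finset ℤ) : Finset ℤ :=
  A.filter (fun d => ∃ a ∈ S, ∃ b ∈ S, ∃ c ∈ S, d = b + c - a)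

/-- `G^good`: the union of all iterated steps, starting from `G`. -/
def goodClosure (A G : Finset ℤ) : Set ℤ :=
  ⋃ i : ℕ, ((goodStep A)^[i] G : Set ℤ)

open Finset

private def cntA (A : Finset ℤ) (t : ℤ) : ℤ := ((A.filter (fun a => a ≤ t)).card : ℤ)

private def awalk (A : Finset ℤ) (t : ℤ) : ℤ := 2 * cntA A t - (t + 1)

private lemma cntA_step (A : Finset ℤ) (t : ℤ) :
    cntA A t = cntA A (t - 1) + (if t ∈ A then 1 else 0) := by
  classical
  unfold cntA
  have hsplit : A.filter (fun a => a ≤ t)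
      = A.filter (fun a => a ≤ t - 1) ∪ A.filter (fun a => a = t) := by
    ext a
    simp only [mem_filter, mem_union]
    constructor
    · rintro ⟨ha, h⟩
      by_cases h' : a = t
      · exact Or.inr ⟨ha, h'⟩
      · exact Or.inl ⟨ha, by omega⟩
    · rintro (⟨ha, h⟩ | ⟨ha, h⟩)
      · exact ⟨ha, by omega⟩
      · exact ⟨ha, by omega⟩
  have hdisj : Disjoint (A.filter (fun a => a ≤ t - 1)) (A.filter (fun a => a = t)) := by
    rw [Finset.disjoint_left]
    intro a h1 h2
    simp only [mem_filter] at h1 h2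
    omega
  rw [hsplit, card_union_of_disjoint hdisj, Finset.filter_eq']
  split_ifs with h <;> simp

private lemma awalk_step (A : Finset ℤ) (t : ℤ) :
    awalk A t = awalk A (t - 1) + (if t ∈ A then 1 else -1) := by
  have := cntA_step A t
  unfold awalk
  split_ifs with h <;> simp [h] at this <;> omega

private lemma awalk_mem (A : Finset ℤ) {t : ℤ} (h : t ∈ A) :
    awalk A t = awalk A (t - 1) + 1 := by
  have := awalk_step A t; rw [if_pos h] at this; exact this

private lemma awalk_notMem (A : Finset ℤ) {t : ℤ} (h : t ∉ A) :
    awalk A t = awalk A (t - 1) - 1 := by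
  have := awalk_step A t; rw [if_neg h] at this; omega

private lemma awalk_le_succ (A : Finset ℤ) (t : ℤ) :
    awalk A t ≤ awalk A (t - 1) + 1 ∧ awalk A (t - 1) - 1 ≤ awalk A t := by
  have := awalk_step A t; split_ifs at this <;> omega

private lemma cntA_interval (A : Finset ℤ) (t q : ℤ) (h : t ≤ q) :
    ((A.filter (fun a => t + 1 ≤ a ∧ a ≤ q)).card : ℤ) = cntA A q - cntA A t := by
  classical
  unfold cntA
  have hsplit : A.filter (fun a => a ≤ q)
      = A.filter (fun a => a ≤ t) ∪ A.filter (fun a => t + 1 ≤ a ∧ a ≤ q) := by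
    ext a
    simp only [mem_filter, mem_union]
    constructor
    · rintro ⟨ha, hle⟩
      by_cases h' : a ≤ t
      · exact Or.inl ⟨ha, h'⟩
      · exact Or.inr ⟨ha, by omega, hle⟩
    · rintro (⟨ha, h'⟩ | ⟨ha, h1, h2⟩)
      · exact ⟨ha, by omega⟩
      · exact ⟨ha, h2⟩
  have hdisj : Disjoint (A.filter (fun a => a ≤ t)) (A.filter (fun a => t + 1 ≤ a ∧ a ≤ q)) := by
    rw [Finset.disjoint_left]
    intro a h1 h2
    simp only [mem_filter] at h1 h2
    omega
  rw [hsplit, card_union_of_disjoint hdisj]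
  push_cast
  ring

private lemma ivt_up (A : Finset ℤ) : ∀ (k : ℕ) (u c : ℤ), awalk A u ≤ c → c ≤ awalk A (u + k) →
    ∃ z, u ≤ z ∧ z ≤ u + k ∧ awalk A z = c := by
  intro k
  induction k with
  | zero =>
    intro u c h1 h2
    refine ⟨u, le_refl _, by omega, ?_⟩
    simp only [Nat.cast_zero, add_zero] at h2
    omega
  | succ k ih =>
    intro u c h1 h2
    by_cases hc : c ≤ awalk A (u + k)
    · obtain ⟨z, hz1, hz2, hz3⟩ := ih u c h1 hc
      exact ⟨z, hz1, by push_cast; omega, hz3⟩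
    · push_neg at hc
      refine ⟨u + (k + 1 : ℕ), by push_cast; omega, le_refl _, ?_⟩
      have hstep := (awalk_le_succ A (u + (k + 1 : ℕ))).1
      have he : u + ((k : ℤ) + 1) - 1 = u + (k : ℤ) := by ring
      push_cast at h2 hstep ⊢
      rw [he] at hstep
      omega

private lemma ivt_down (A : Finset ℤ) : ∀ (k : ℕ) (u c : ℤ), c ≤ awalk A u → awalk A (u + k) ≤ c →
    ∃ z, u ≤ z ∧ z ≤ u + k ∧ awalk A z = c := by
  intro k
  induction k with
  | zero =>
    intro u c h1 h2
    refine ⟨u, le_refl _, by omega, ?_⟩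
    simp only [Nat.cast_zero, add_zero] at h2
    omega
  | succ k ih =>
    intro u c h1 h2
    by_cases hc : awalk A (u + k) ≤ c
    · obtain ⟨z, hz1, hz2, hz3⟩ := ih u c h1 hc
      exact ⟨z, hz1, by push_cast; omega, hz3⟩
    · push_neg at hc
      refine ⟨u + (k + 1 : ℕ), by push_cast; omega, le_refl _, ?_⟩
      have hstep := (awalk_le_succ A (u + (k + 1 : ℕ))).2
      have he : u + ((k : ℤ) + 1) - 1 = u + (k : ℤ) := by ring
      push_cast at h2 hstep ⊢
      rw [he] at hstep
      omega

private lemma ivt_up' (A : Finset ℤ) {u v c : ℤ} (huv : u ≤ v) (h1 : awalk A u ≤ c)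
    (h2 : c ≤ awalk A v) : ∃ z, u ≤ z ∧ z ≤ v ∧ awalk A z = c := by
  obtain ⟨k, hk⟩ : ∃ k : ℕ, v = u + k := ⟨(v - u).toNat, by omega⟩
  subst hk
  exact ivt_up A _ u c h1 h2

private lemma ivt_down' (A : Finset ℤ) {u v c : ℤ} (huv : u ≤ v) (h1 : c ≤ awalk A u)
    (h2 : awalk A v ≤ c) : ∃ z, u ≤ z ∧ z ≤ v ∧ awalk A z = c := by
  obtain ⟨k, hk⟩ : ∃ k : ℕ, v = u + k := ⟨(v - u).toNat, by omega⟩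
  subst hk
  exact ivt_down A _ u c h1 h2

private lemma iter_subset_A (A G : Finset ℤ) (hG : G ⊆ A) :
    ∀ i, (goodStep A)^[i] G ⊆ A := by
  intro i
  induction i with
  | zero => simpa using hG
  | succ i ih =>
    rw [Function.iterate_succ_apply']
    exact filter_subset _ _

private lemma iter_mono (A G : Finset ℤ) (hG : G ⊆ A) :
    ∀ {i k : ℕ}, i ≤ k → (goodStep A)^[i] G ⊆ (goodStep A)^[k] G := by
  have hstep : ∀ i, (goodStep A)^[i] G ⊆ (goodStep A)^[i + 1] G := by
    intro i z hz
    rw [Function.iterate_succ_apply']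
    exact mem_filter.mpr ⟨iter_subset_A A G hG i hz, z, hz, z, hz, z, hz, by ring⟩
  intro i k hik
  induction k with
  | zero => simpa [Nat.le_zero.mp hik] using subset_rfl
  | succ k ih =>
    rcases Nat.lt_or_ge i (k + 1) with h | h
    · exact (ih (by omega)).trans (hstep k)
    · have : i = k + 1 := by omega
      simp [this]

private lemma closure_closed (A G : Finset ℤ) (hG : G ⊆ A) {d a b c : ℤ}
    (hd : d ∈ A) (ha : a ∈ goodClosure A G) (hb : b ∈ goodClosure A G)
    (hc : c ∈ goodClosure A G) (habc : d = b + c - a) : d ∈ goodClosure A G := by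
  obtain ⟨ia, ha⟩ := Set.mem_iUnion.mp ha
  obtain ⟨ib, hb⟩ := Set.mem_iUnion.mp hb
  obtain ⟨ic, hc⟩ := Set.mem_iUnion.mp hc
  have ha' : a ∈ (goodStep A)^[max ia (max ib ic)] G :=
    iter_mono A G hG (le_max_left _ _) (Finset.mem_coe.mp ha)
  have hb' : b ∈ (goodStep A)^[max ia (max ib ic)] G :=
    iter_mono A G hG (le_trans (le_max_left _ _) (le_max_right _ _)) (Finset.mem_coe.mp hb)
  have hc' : c ∈ (goodStep A)^[max ia (max ib ic)] G :=
    iter_mono A G hG (le_trans (le_max_right _ _) (le_max_right _ _)) (Finset.mem_coe.mp hc)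
  have hd' : d ∈ (goodStep A)^[max ia (max ib ic) + 1] G := by
    rw [Function.iterate_succ_apply']
    exact mem_filter.mpr ⟨hd, a, ha', b, hb', c, hc', habc⟩
  exact Set.mem_iUnion.mpr ⟨max ia (max ib ic) + 1, Finset.mem_coe.mpr hd'⟩



private lemma awalk_neg_one (s : ℕ) (A : Finset ℤ) (hsub : A ⊆ Finset.Icc 0 ((s:ℤ)-1)) :
    awalk A (-1) = 0 := by
  unfold awalk cntA
  have h : A.filter (fun a => a ≤ (-1:ℤ)) = ∅ := by
    rw [Finset.filter_eq_empty_iff]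
    intro a ha
    have := Finset.mem_Icc.mp (hsub ha)
    omega
  simp [h]

private lemma awalk_top (s : ℕ) (A : Finset ℤ) (hsub : A ⊆ Finset.Icc 0 ((s:ℤ)-1)) :
    awalk A ((s:ℤ) - 1) = 2 * A.card - s := by
  unfold awalk cntA
  have h : A.filter (fun a => a ≤ (s:ℤ) - 1) = A := by
    rw [Finset.filter_eq_self]
    intro a ha
    exact (Finset.mem_Icc.mp (hsub ha)).2
  rw [h]
  ring

private lemma window_ineq_below (A S : Finset ℤ)
    (hScl : ∀ d ∈ A, ∀ a ∈ S, ∀ b ∈ S, ∀ c ∈ S, d = b + c - a → d ∈ S)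
    (t q x : ℤ) (htx : t + 1 ≤ x) (hxq : x + 1 ≤ q)
    (hxS : x ∈ S) (hx1S : x + 1 ∈ S) (hxA : x ∈ A) (hx1A : x + 1 ∈ A)
    (htA : t ∈ A) (htS : t ∉ S)
    (hq : ∀ a ∈ A, t + 1 ≤ a → a ≤ q → a ∈ S) :
    awalk A q ≤ awalk A t + (if q ∈ A then 1 else 0) := by
  classical
  set T := A.filter (fun a => t + 1 ≤ a ∧ a ≤ q) with hT
  have hTS : ∀ a ∈ T, a ∈ S := by
    intro a ha
    have := mem_filter.mp ha
    exact hq a this.1 this.2.1 this.2.2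
  have hxT : x ∈ T := mem_filter.mpr ⟨hxA, htx, by omega⟩
  have hTne : T.Nonempty := ⟨x, hxT⟩
  set z₁ := T.max' hTne with hz₁
  have hz₁T : z₁ ∈ T := T.max'_mem hTne
  have hz₁b : t + 1 ≤ z₁ ∧ z₁ ≤ q := (mem_filter.mp hz₁T).2
  set P₁ := (T.erase q).image (fun c => c - t) with hP₁
  set P₂ := (T.erase z₁).image (fun b => z₁ - b) with hP₂
  have hP₁card : P₁.card = (T.erase q).card :=
    card_image_of_injective _ (fun a b hab => by omega)
  have hP₂card : P₂.card = (T.erase z₁).card :=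
    card_image_of_injective _ (fun a b hab => by omega)
  have hP₁sub : P₁ ⊆ Finset.Icc 1 (q - t - 1) := by
    intro v hv
    obtain ⟨c, hc, rfl⟩ := mem_image.mp hv
    have h1 := mem_erase.mp hc
    have h2 := (mem_filter.mp h1.2).2
    have := h1.1
    rw [mem_Icc]
    omega
  have hP₂sub : P₂ ⊆ Finset.Icc 1 (q - t - 1) := by
    intro v hv
    obtain ⟨b, hbm, rfl⟩ := mem_image.mp hv
    have h1 := mem_erase.mp hbm
    have h2 := (mem_filter.mp h1.2).2
    have h3 : b ≤ z₁ := T.le_max' b h1.2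
    have := h1.1
    rw [mem_Icc]
    omega
  have hdisj : Disjoint P₁ P₂ := by
    rw [Finset.disjoint_left]
    intro v hv1 hv2
    obtain ⟨c, hc, hcv⟩ := mem_image.mp hv1
    obtain ⟨b, hbm, hbv⟩ := mem_image.mp hv2
    have hcS : c ∈ S := hTS c (mem_erase.mp hc).2
    have hbS : b ∈ S := hTS b (mem_erase.mp hbm).2
    have hz₁S : z₁ ∈ S := hTS z₁ hz₁T
    exact htS (hScl t htA z₁ hz₁S b hbS c hcS (by omega))
  have hle : P₁.card + P₂.card ≤ (Finset.Icc (1:ℤ) (q - t - 1)).card := by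
    rw [← card_union_of_disjoint hdisj]
    exact card_le_card (union_subset hP₁sub hP₂sub)
  have hIcc : (Finset.Icc (1:ℤ) (q - t - 1)).card = (q - t - 1).toNat := by
    rw [Int.card_Icc]
    congr 1
    ring
  have h1 : (T.erase z₁).card = T.card - 1 := card_erase_of_mem hz₁T
  have hn1 : 1 ≤ T.card := card_pos.mpr hTne
  have hn : (T.card : ℤ) = cntA A q - cntA A t := cntA_interval A t q (by omega)
  have hgoal : 2 * (T.card : ℤ) ≤ (q - t) + (if q ∈ A then 1 else 0) := by
    by_cases hqA : q ∈ A
    · have h2 : (T.erase q).card = T.card - 1 :=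
        card_erase_of_mem (mem_filter.mpr ⟨hqA, by omega, le_refl _⟩)
      rw [if_pos hqA]
      rw [hP₁card, hP₂card, h1, h2, hIcc] at hle
      omega
    · have h2 : (T.erase q).card = T.card := by
        rw [Finset.erase_eq_of_notMem]
        intro hqT
        exact hqA (mem_filter.mp hqT).1
      rw [if_neg hqA]
      rw [hP₁card, hP₂card, h1, h2, hIcc] at hle
      omega
  unfold awalk
  omega

private lemma window_ineq_above (A S : Finset ℤ)
    (hScl : ∀ d ∈ A, ∀ a ∈ S, ∀ b ∈ S, ∀ c ∈ S, d = b + c - a → d ∈ S)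
    (t q x : ℤ) (htx : t + 1 ≤ x) (hxq : x + 1 ≤ q)
    (hxS : x ∈ S) (hx1S : x + 1 ∈ S) (hxA : x ∈ A) (hx1A : x + 1 ∈ A)
    (hdA : q + 1 ∈ A) (hdS : q + 1 ∉ S)
    (hq : ∀ a ∈ A, t + 1 ≤ a → a ≤ q → a ∈ S) :
    awalk A q ≤ awalk A t + 1 := by
  classical
  set T := A.filter (fun a => t + 1 ≤ a ∧ a ≤ q) with hT
  have hTS : ∀ a ∈ T, a ∈ S := by
    intro a ha
    have := mem_filter.mp ha
    exact hq a this.1 this.2.1 this.2.2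
  have hxT : x ∈ T := mem_filter.mpr ⟨hxA, htx, by omega⟩
  have hTne : T.Nonempty := ⟨x, hxT⟩
  set z₀ := T.min' hTne with hz₀
  have hz₀T : z₀ ∈ T := T.min'_mem hTne
  have hz₀b : t + 1 ≤ z₀ ∧ z₀ ≤ q := (mem_filter.mp hz₀T).2
  set P₁ := (T.erase (t + 1)).image (fun b => q + 1 - b) with hP₁
  set P₂ := (T.erase z₀).image (fun b => b - z₀) with hP₂
  have hP₁card : P₁.card = (T.erase (t + 1)).card :=
    card_image_of_injective _ (fun a b hab => by omega)
  have hP₂card : P₂.card = (T.erase z₀).card :=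
    card_image_of_injective _ (fun a b hab => by omega)
  have hP₁sub : P₁ ⊆ Finset.Icc 1 (q - t - 1) := by
    intro v hv
    obtain ⟨b, hbm, rfl⟩ := mem_image.mp hv
    have h1 := mem_erase.mp hbm
    have h2 := (mem_filter.mp h1.2).2
    have := h1.1
    rw [mem_Icc]
    omega
  have hP₂sub : P₂ ⊆ Finset.Icc 1 (q - t - 1) := by
    intro v hv
    obtain ⟨b, hbm, rfl⟩ := mem_image.mp hv
    have h1 := mem_erase.mp hbm
    have h2 := (mem_filter.mp h1.2).2
    have h3 : z₀ ≤ b := T.min'_le b h1.2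
    have := h1.1
    rw [mem_Icc]
    omega
  have hdisj : Disjoint P₁ P₂ := by
    rw [Finset.disjoint_left]
    intro v hv1 hv2
    obtain ⟨b, hbm, hbv⟩ := mem_image.mp hv1
    obtain ⟨c, hc, hcv⟩ := mem_image.mp hv2
    have hcS : c ∈ S := hTS c (mem_erase.mp hc).2
    have hbS : b ∈ S := hTS b (mem_erase.mp hbm).2
    have hz₀S : z₀ ∈ S := hTS z₀ hz₀T
    exact hdS (hScl (q + 1) hdA z₀ hz₀S b hbS c hcS (by omega))
  have hle : P₁.card + P₂.card ≤ (Finset.Icc (1:ℤ) (q - t - 1)).card := by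
    rw [← card_union_of_disjoint hdisj]
    exact card_le_card (union_subset hP₁sub hP₂sub)
  have hIcc : (Finset.Icc (1:ℤ) (q - t - 1)).card = (q - t - 1).toNat := by
    rw [Int.card_Icc]
    congr 1
    ring
  have h1 : (T.erase z₀).card = T.card - 1 := card_erase_of_mem hz₀T
  have h2 : T.card - 1 ≤ (T.erase (t + 1)).card := Finset.pred_card_le_card_erase
  have hn1 : 1 ≤ T.card := card_pos.mpr hTne
  have hn : (T.card : ℤ) = cntA A q - cntA A t := cntA_interval A t q (by omega)
  have hgoal : 2 * (T.card : ℤ) ≤ (q - t) + 1 := by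
    rw [hP₁card, hP₂card, h1, hIcc] at hle
    omega
  unfold awalk
  omega

private lemma keystep (s : ℕ) (hs : 3 < s) (A : Finset ℤ)
    (hsub : A ⊆ Finset.Icc 0 ((s : ℤ) - 1))
    (hcon : ∀ x : ℤ, x ∈ A → x + 1 ∈ A → goodClosure A {x, x + 1} ≠ (A : Set ℤ))
    (j : ℤ) (hj1 : 1 ≤ j) (hj2 : j ≤ 2 * (A.card : ℤ) - (s : ℤ) - 2) :
    ∃ u : ℤ, 0 ≤ u ∧ u ≤ (s : ℤ) - 1 ∧ u ∉ A ∧ awalk A u = j := by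
  classical
  set σ : ℤ := (s : ℤ) with hσ
  have hσ4 : 4 ≤ σ := by omega
  set F : ℤ := 2 * (A.card : ℤ) - σ with hF
  have hw0 : awalk A (-1) = 0 := awalk_neg_one s A hsub
  have hwtop : awalk A (σ - 1) = F := awalk_top s A hsub
  have hjF : j ≤ F - 2 := hj2
  set VT := (Finset.Icc (-1) (σ - 1)).filter (fun t => awalk A t = j) with hVT
  have hVTne : VT.Nonempty := by
    obtain ⟨z, hz1, hz2, hz3⟩ := ivt_up' A (u := -1) (v := σ - 1) (c := j)
      (by omega) (by omega) (by omega)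
    exact ⟨z, mem_filter.mpr ⟨mem_Icc.mpr ⟨hz1, hz2⟩, hz3⟩⟩
  set Tj := VT.max' hVTne with hTjdef
  have hTj_mem := VT.max'_mem hVTne
  have hTjw : awalk A Tj = j := (mem_filter.mp hTj_mem).2
  have hTjlo : -1 ≤ Tj := (mem_Icc.mp (mem_filter.mp hTj_mem).1).1
  have hTjhi : Tj ≤ σ - 1 := (mem_Icc.mp (mem_filter.mp hTj_mem).1).2
  have hafter : ∀ v, Tj < v → v ≤ σ - 1 → j + 1 ≤ awalk A v := by
    intro v hv1 hv2
    by_contra hcontra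
    push_neg at hcontra
    obtain ⟨z, hz1, hz2, hz3⟩ := ivt_up' A (u := v) (v := σ - 1) (c := j) hv2
      (by omega) (by omega)
    have hzVT : z ∈ VT := mem_filter.mpr ⟨mem_Icc.mpr ⟨by omega, hz2⟩, hz3⟩
    have := VT.le_max' z hzVT
    omega
  have hTjhi' : Tj ≤ σ - 2 := by
    rcases eq_or_lt_of_le hTjhi with h | h
    · rw [h, hwtop] at hTjw; omega
    · omega
  set x := Tj + 1 with hxdef
  have hwx : awalk A x = j + 1 := by
    have h1 := hafter x (by omega) (by omega)
    have h2 := (awalk_le_succ A x).1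
    have hxx : x - 1 = Tj := by omega
    rw [hxx, hTjw] at h2
    omega
  have hxA : x ∈ A := by
    by_contra hxA
    have hh := awalk_notMem A hxA
    have hxx : x - 1 = Tj := by omega
    rw [hxx, hTjw] at hh
    omega
  have hx0 : 0 ≤ x := (mem_Icc.mp (hsub hxA)).1
  have hxhi : x ≤ σ - 2 := by
    rcases eq_or_lt_of_le ((mem_Icc.mp (hsub hxA)).2) with h | h
    · rw [h, hwtop] at hwx; omega
    · omega
  have hwx1 : awalk A (x + 1) = j + 2 := by
    have h1 := hafter (x + 1) (by omega) (by omega)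
    have h2 := awalk_step A (x + 1)
    have hxx : x + 1 - 1 = x := by omega
    rw [hxx, hwx] at h2
    split_ifs at h2 <;> omega
  have hx1A : x + 1 ∈ A := by
    by_contra hc
    have hh := awalk_notMem A hc
    have hxx : x + 1 - 1 = x := by omega
    rw [hxx, hwx] at hh
    omega
  have hGsub : ({x, x + 1} : Finset ℤ) ⊆ A := by
    intro z hz
    rcases Finset.mem_insert.mp hz with h | h
    · exact h ▸ hxA
    · exact (Finset.mem_singleton.mp h) ▸ hx1A
  set S := A.filter (fun a => a ∈ goodClosure A {x, x + 1}) with hSdef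
  have hSsub : S ⊆ A := filter_subset _ _
  have hxS : x ∈ S := mem_filter.mpr ⟨hxA, Set.mem_iUnion.mpr ⟨0, by simp⟩⟩
  have hx1S : x + 1 ∈ S := mem_filter.mpr ⟨hx1A, Set.mem_iUnion.mpr ⟨0, by simp⟩⟩
  have hScl : ∀ d ∈ A, ∀ a ∈ S, ∀ b ∈ S, ∀ c ∈ S, d = b + c - a → d ∈ S := by
    intro d hd a ha b hb c hc habc
    exact mem_filter.mpr ⟨hd, closure_closed A _ hGsub hd (mem_filter.mp ha).2
      (mem_filter.mp hb).2 (mem_filter.mp hc).2 habc⟩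
  have hSA : S ≠ A := by
    intro hEq
    apply hcon x hxA hx1A
    apply Set.Subset.antisymm
    · intro z hz
      obtain ⟨i, hi⟩ := Set.mem_iUnion.mp hz
      exact Finset.mem_coe.mpr (iter_subset_A A _ hGsub i (Finset.mem_coe.mp hi))
    · intro z hz
      have hzS : z ∈ S := hEq ▸ (Finset.mem_coe.mp hz)
      exact (mem_filter.mp hzS).2
  obtain ⟨d₀, hd₀A, hd₀S⟩ : ∃ d ∈ A, d ∉ S := by
    by_contra hc
    push_neg at hc
    exact hSA (Finset.Subset.antisymm hSsub hc)
  have hsplit : ∀ d ∈ A, d ∉ S → d < x ∨ x + 1 < d := by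
    intro d hd hdS
    by_contra hc
    push_neg at hc
    have : d = x ∨ d = x + 1 := by omega
    rcases this with rfl | rfl
    · exact hdS hxS
    · exact hdS hx1S
  set below := A.filter (fun d => d ∉ S ∧ d < x) with hbelow
  set above := A.filter (fun d => d ∉ S ∧ x + 1 < d) with habove
  by_cases hb : below.Nonempty
  · -- main case: there is a violator below
    set t := below.max' hb with htdef
    have htmem := below.max'_mem hb
    have htA : t ∈ A := (mem_filter.mp htmem).1
    have htS : t ∉ S := (mem_filter.mp htmem).2.1
    have htx : t < x := (mem_filter.mp htmem).2.2
    have ht0 : 0 ≤ t := (mem_Icc.mp (hsub htA)).1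
    obtain ⟨q, hq1, hq2, hqprop⟩ : ∃ q : ℤ, x + 1 ≤ q ∧ q ≤ σ - 1 ∧
        ∀ a ∈ A, t + 1 ≤ a → a ≤ q → a ∈ S := by
      by_cases ha : above.Nonempty
      · set dq := above.min' ha with hdq
        have hdqmem := above.min'_mem ha
        have hdqA : dq ∈ A := (mem_filter.mp hdqmem).1
        have hdqx : x + 1 < dq := (mem_filter.mp hdqmem).2.2
        refine ⟨dq - 1, by omega, ?_, ?_⟩
        · have := (mem_Icc.mp (hsub hdqA)).2; omega
        · intro a haA h1 h2
          by_contra haS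
          rcases hsplit a haA haS with h | h
          · have : a ≤ t := Finset.le_max' _ _ (mem_filter.mpr ⟨haA, haS, h⟩)
            omega
          · have : dq ≤ a := Finset.min'_le _ _ (mem_filter.mpr ⟨haA, haS, h⟩)
            omega
      · refine ⟨σ - 1, by omega, le_refl _, ?_⟩
        intro a haA h1 h2
        by_contra haS
        rcases hsplit a haA haS with h | h
        · have : a ≤ t := Finset.le_max' _ _ (mem_filter.mpr ⟨haA, haS, h⟩)
          omega
        · exact ha ⟨a, mem_filter.mpr ⟨haA, haS, h⟩⟩
    have hineq := window_ineq_below A S hScl t q x (by omega) hq1 hxS hx1S hxA hx1A htA htS hqprop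
    have hfq : j + 1 ≤ awalk A q := hafter q (by omega) hq2
    by_cases hft : j + 1 ≤ awalk A t
    · -- case (a): find the first down-crossing in (t, Tj]
      have htTj : t + 1 ≤ Tj := by
        have hne : t ≠ Tj := by
          intro h
          rw [h, hTjw] at hft
          omega
        omega
      set W := (Finset.Icc (t + 1) Tj).filter (fun v => awalk A v = j) with hW
      have hWne : W.Nonempty := ⟨Tj, mem_filter.mpr ⟨mem_Icc.mpr ⟨htTj, le_refl _⟩, hTjw⟩⟩
      set u := W.min' hWne with hudef
      have humem := W.min'_mem hWne
      have huw : awalk A u = j := (mem_filter.mp humem).2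
      have hulo : t + 1 ≤ u := (mem_Icc.mp (mem_filter.mp humem).1).1
      have huhi : u ≤ Tj := (mem_Icc.mp (mem_filter.mp humem).1).2
      have huA : u ∉ A := by
        intro hmem
        have hstep := awalk_mem A hmem
        have hw1 : awalk A (u - 1) = j - 1 := by omega
        obtain ⟨z, hz1, hz2, hz3⟩ := ivt_down' A (u := t) (v := u - 1) (c := j)
          (by omega) (by omega) (by omega)
        have hzt : z ≠ t := by
          intro h
          rw [h] at hz3
          omega
        have hzW : z ∈ W := mem_filter.mpr ⟨mem_Icc.mpr ⟨by omega, by omega⟩, hz3⟩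
        have := W.min'_le z hzW
        omega
      exact ⟨u, by omega, by omega, huA, huw⟩
    · -- case (b): impossible
      exfalso
      push_neg at hft
      have hqA : q ∈ A := by
        by_contra hqA
        rw [if_neg hqA] at hineq
        omega
      rw [if_pos hqA] at hineq
      have hq1w : awalk A (q - 1) = j := by
        have := awalk_mem A hqA
        omega
      have := hafter (q - 1) (by omega) (by omega)
      omega
  · -- no violator below: contradiction via the above-window
    exfalso
    have haNe : above.Nonempty := by
      rcases hsplit d₀ hd₀A hd₀S with h | h
      · exact absurd ⟨d₀, mem_filter.mpr ⟨hd₀A, hd₀S, h⟩⟩ hb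
      · exact ⟨d₀, mem_filter.mpr ⟨hd₀A, hd₀S, h⟩⟩
    set dq := above.min' haNe with hdq
    have hdqmem := above.min'_mem haNe
    have hdqA : dq ∈ A := (mem_filter.mp hdqmem).1
    have hdqS : dq ∉ S := (mem_filter.mp hdqmem).2.1
    have hdqx : x + 1 < dq := (mem_filter.mp hdqmem).2.2
    have hdqhi : dq ≤ σ - 1 := (mem_Icc.mp (hsub hdqA)).2
    have hqprop : ∀ a ∈ A, (-1 : ℤ) + 1 ≤ a → a ≤ dq - 1 → a ∈ S := by
      intro a haA h1 h2
      by_contra haS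
      rcases hsplit a haA haS with h | h
      · exact hb ⟨a, mem_filter.mpr ⟨haA, haS, h⟩⟩
      · have : dq ≤ a := Finset.min'_le _ _ (mem_filter.mpr ⟨haA, haS, h⟩)
        omega
    have hdA' : (dq - 1) + 1 ∈ A := by
      have : dq - 1 + 1 = dq := by omega
      rw [this]; exact hdqA
    have hdS' : (dq - 1) + 1 ∉ S := by
      have : dq - 1 + 1 = dq := by omega
      rw [this]; exact hdqS
    have hineq := window_ineq_above A S hScl (-1) (dq - 1) x (by omega) (by omega)
      hxS hx1S hxA hx1A hdA' hdS' hqprop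
    rw [hw0] at hineq
    have hfq : j + 1 ≤ awalk A (dq - 1) := hafter (dq - 1) (by omega) (by omega)
    omega

theorem generated_by_consecutive_pair (s : ℕ) (hs : 3 < s) (A : Finset ℤ)
    (hsub : A ⊆ Finset.Icc 0 ((s : ℤ) - 1))
    (hcard : 2 * s + 3 ≤ 3 * A.card) :
    ∃ x : ℤ, x ∈ A ∧ x + 1 ∈ A ∧ goodClosure A {x, x + 1} = (A : Set ℤ) := by
  classical
  by_contra hcontra
  push_neg at hcontra
  set F : ℤ := 2 * (A.card : ℤ) - (s : ℤ) with hF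
  have hcard' : 2 * (s : ℤ) + 3 ≤ 3 * (A.card : ℤ) := by exact_mod_cast hcard
  have key : ∀ j : ℤ, 1 ≤ j → j ≤ F - 2 →
      ∃ u : ℤ, 0 ≤ u ∧ u ≤ (s : ℤ) - 1 ∧ u ∉ A ∧ awalk A u = j :=
    fun j h1 h2 => keystep s hs A hsub hcontra j h1 (by omega)
  set f : ℤ → ℤ := fun j => if h : 1 ≤ j ∧ j ≤ F - 2 then (key j h.1 h.2).choose else 0
    with hfdef
  have hspec : ∀ j ∈ Finset.Icc (1:ℤ) (F - 2),
      0 ≤ f j ∧ f j ≤ (s : ℤ) - 1 ∧ f j ∉ A ∧ awalk A (f j) = j := by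
    intro j hj
    have h := mem_Icc.mp hj
    simp only [hfdef, dif_pos h]
    exact (key j h.1 h.2).choose_spec
  have hmaps : ∀ j ∈ Finset.Icc (1:ℤ) (F - 2), f j ∈ (Finset.Icc (0:ℤ) ((s:ℤ) - 1)) \ A := by
    intro j hj
    obtain ⟨h1, h2, h3, _⟩ := hspec j hj
    exact Finset.mem_sdiff.mpr ⟨mem_Icc.mpr ⟨h1, h2⟩, h3⟩
  have hinj : Set.InjOn f (Finset.Icc (1:ℤ) (F - 2)) := by
    intro a ha b hb hab
    have h1 := (hspec a (Finset.mem_coe.mp ha)).2.2.2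
    have h2 := (hspec b (Finset.mem_coe.mp hb)).2.2.2
    rw [hab] at h1
    omega
  have hcount := Finset.card_le_card_of_injOn f hmaps hinj
  have hc1 : (Finset.Icc (1:ℤ) (F - 2)).card = (F - 2).toNat := by
    rw [Int.card_Icc]; congr 1; ring
  have hc3 : (Finset.Icc (0:ℤ) ((s:ℤ) - 1)).card = s := by
    rw [Int.card_Icc]; omega
  have hc2 : ((Finset.Icc (0:ℤ) ((s:ℤ) - 1)) \ A).card
      = (Finset.Icc (0:ℤ) ((s:ℤ) - 1)).card - A.card := Finset.card_sdiff_of_subset hsub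
  have hAcard : A.card ≤ s := by
    have := Finset.card_le_card hsub
    omega
  rw [hc1, hc2, hc3] at hcount
  omega
end

section
/- Let s ≥ 6, A = {0 = a_1, ..., a_s} ⊆ [0, N-1] with gcd(a_2,...,a_s) = 1, and let x_1, ..., x_s be integers such that whenever a_j - a_i = a_r - a_t one has x_j - x_i = x_r - x_t. If |A+A| < (5/2)s, then there exist integers x, y with x_i = a_i·x + y for every i. -/
open Pointwise

/-!
Lift `A` to `B = {(aᵢ, xᵢ)} ⊆ ℤ²`. The hypothesis on `x` says exactly that `Prod.fst` is injective
on `B + B`, so `|B + B| = |A + A| < 5s/2 ≤ 3s - 3`. Freiman's lemma in the plane (a set not on a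
line has `|B + B| ≥ 3|B| - 3`) therefore puts `B` on a line `p a + q x = r`. Then `q ∣ p aᵢ` for
all `i`, hence `q ∣ p` by the gcd condition, and `x` is affine in `a`.

Freiman's lemma follows by removing the lexicographically largest point `v`, a vertex of the
convex hull. If the remaining points lie on a line, Cauchy–Davenport counts `B + B`. Otherwise `2v`
and the sums `v + u`, for `u` the point nearest to `v` on either hull edge at `v`, are three new
sums: the edges are the extreme slopes of `c - v`, and `v + u = c + c'` would force `c` onto the
edge while `c' < v` lexicographically.
-/

open Finset

namespace FreimanPlane

def cross (d : ℤ × ℤ) : ℤ × ℤ →+ ℤ :=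
  d.1 • AddMonoidHom.snd ℤ ℤ - d.2 • AddMonoidHom.fst ℤ ℤ

@[simp] lemma cross_apply (d e : ℤ × ℤ) : cross d e = d.1 * e.2 - d.2 * e.1 := by
  simp [cross]

lemma cross_self (d : ℤ × ℤ) : cross d d = 0 := by simp [mul_comm]

lemma cross_swap (d e : ℤ × ℤ) : cross e d = -cross d e := by simp; ring

def LiesOnLine (B : Finset (ℤ × ℤ)) : Prop :=
  ∃ p q r : ℤ, (p, q) ≠ 0 ∧ ∀ b ∈ B, p * b.1 + q * b.2 = r

lemma liesOnLine_of_cross_eq_zero {B : Finset (ℤ × ℤ)} {v d : ℤ × ℤ} (hd : d ≠ 0)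
    (h : ∀ b ∈ B, cross d (b - v) = 0) : LiesOnLine B := by
  refine ⟨d.2, -d.1, d.2 * v.1 - d.1 * v.2, fun h0 => hd ?_, fun b hb => ?_⟩
  · simp only [Prod.mk_eq_zero, neg_eq_zero] at h0
    exact Prod.ext h0.2 h0.1
  · have hb' := h b hb
    simp only [cross_apply, Prod.fst_sub, Prod.snd_sub] at hb'
    linear_combination -hb'

def dirSlope (d : ℤ × ℤ) : WithTop ℚ := if d.1 = 0 then ⊤ else ((d.2 / d.1 : ℚ) : WithTop ℚ)

lemma toLex_neg_iff {d : ℤ × ℤ} : toLex d < 0 ↔ d.1 < 0 ∨ d.1 = 0 ∧ d.2 < 0 :=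
  Prod.Lex.toLex_lt_toLex (y := 0)

lemma cross_nonneg_iff {d e : ℤ × ℤ} (hd : toLex d < 0) (he : toLex e < 0) :
    0 ≤ cross d e ↔ dirSlope d ≤ dirSlope e := by
  rw [toLex_neg_iff] at hd he
  rcases hd with hd1 | ⟨hd1, hd2⟩ <;> rcases he with he1 | ⟨he1, he2⟩
  · simp only [dirSlope, hd1.ne, he1.ne, if_false, cross_apply, WithTop.coe_le_coe]
    rw [← neg_div_neg_eq, ← neg_div_neg_eq (e.2 : ℚ), div_le_div_iff₀ (by simpa using hd1)
      (by simpa using he1)]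
    constructor <;> intro h
    · have : (0 : ℚ) ≤ d.1 * e.2 - d.2 * e.1 := by exact_mod_cast h
      linarith
    · have : (0 : ℚ) ≤ d.1 * e.2 - d.2 * e.1 := by linarith
      exact_mod_cast this
  · simp [dirSlope, hd1.ne, he1]; nlinarith
  · simp [dirSlope, hd1, he1.ne]; nlinarith
  · simp [dirSlope, hd1, he1]

lemma cross_pos_iff {d e : ℤ × ℤ} (hd : toLex d < 0) (he : toLex e < 0) :
    0 < cross d e ↔ dirSlope d < dirSlope e := by
  rw [← not_le, ← not_le, ← cross_nonneg_iff he hd, cross_swap e d, neg_nonpos]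

section Extremal

variable {S : Finset (ℤ × ℤ)} {v : ℤ × ℤ}

lemma exists_extremal_of_min_dirSlope (hS : S.Nonempty) (hlt : ∀ c ∈ S, toLex c < toLex v) :
    ∃ u ∈ S, ∀ c ∈ S, 0 ≤ cross (u - v) (c - v) ∧
      (cross (u - v) (c - v) = 0 → toLex c ≤ toLex u) := by
  have hneg : ∀ c ∈ S, toLex (c - v) < 0 := fun c hc => sub_neg.2 (hlt c hc)
  obtain ⟨u, hu, hmin⟩ :=
    S.exists_min_image (fun c => toLex (dirSlope (c - v), OrderDual.toDual (toLex c))) hS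
  refine ⟨u, hu, fun c hc => ?_⟩
  rcases Prod.Lex.toLex_le_toLex.1 (hmin c hc) with hslope | ⟨hslope, hle⟩
  · have hpos := (cross_pos_iff (hneg u hu) (hneg c hc)).2 hslope
    exact ⟨hpos.le, fun h => absurd h hpos.ne'⟩
  · exact ⟨(cross_nonneg_iff (hneg u hu) (hneg c hc)).2 hslope.le, fun _ => hle⟩

lemma exists_extremal_of_max_dirSlope (hS : S.Nonempty) (hlt : ∀ c ∈ S, toLex c < toLex v) :
    ∃ u ∈ S, ∀ c ∈ S, 0 ≤ (-cross (u - v)) (c - v) ∧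
      ((-cross (u - v)) (c - v) = 0 → toLex c ≤ toLex u) := by
  have hneg : ∀ c ∈ S, toLex (c - v) < 0 := fun c hc => sub_neg.2 (hlt c hc)
  obtain ⟨u, hu, hmax⟩ := S.exists_max_image (fun c => toLex (dirSlope (c - v), toLex c)) hS
  refine ⟨u, hu, fun c hc => ?_⟩
  rw [AddMonoidHom.neg_apply, ← cross_swap]
  rcases Prod.Lex.toLex_le_toLex.1 (hmax c hc) with hslope | ⟨hslope, hle⟩
  · have hpos := (cross_pos_iff (hneg c hc) (hneg u hu)).2 hslope
    exact ⟨hpos.le, fun h => absurd h hpos.ne'⟩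
  · exact ⟨(cross_nonneg_iff (hneg c hc) (hneg u hu)).2 hslope.le, fun _ => hle⟩

lemma add_self_notMem_add (hlt : ∀ c ∈ S, toLex c < toLex v) : v + v ∉ S + S := by
  intro h
  obtain ⟨c, hc, c', hc', hsum⟩ := mem_add.1 h
  have := add_lt_add (hlt c hc) (hlt c' hc')
  rw [← toLex_add, ← toLex_add, hsum] at this
  exact this.false

lemma add_notMem_add_of_extremal (φ : ℤ × ℤ →+ ℤ) {u : ℤ × ℤ}
    (hlt : ∀ c ∈ S, toLex c < toLex v) (hu : φ (u - v) = 0)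
    (hφ : ∀ c ∈ S, 0 ≤ φ (c - v) ∧ (φ (c - v) = 0 → toLex c ≤ toLex u)) :
    v + u ∉ S + S := by
  intro h
  obtain ⟨c, hc, c', hc', hsum⟩ := mem_add.1 h
  have hφc : φ (c - v) = 0 := by
    have hdiff : (c - v) + (c' - v) = u - v := by rw [← add_sub_add_comm, hsum]; abel
    have := congrArg φ hdiff
    rw [map_add, hu] at this
    linarith [(hφ c hc).1, (hφ c' hc').1]
  have := add_lt_add_of_le_of_lt ((hφ c hc).2 hφc) (hlt c' hc')
  rw [← toLex_add, ← toLex_add, hsum, add_comm] at this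
  exact this.false

end Extremal

section Induction

variable {B : Finset (ℤ × ℤ)} {v : ℤ × ℤ}

lemma card_add_erase_add_card_erase_lt {p q r : ℤ} (hvB : v ∈ B)
    (hline : ∀ c ∈ B.erase v, p * c.1 + q * c.2 = r) (hv : p * v.1 + q * v.2 ≠ r) :
    #(B.erase v + B.erase v) + #(B.erase v) < #(B + B) := by
  set S := B.erase v
  set T := S.image (v + ·)
  have hSS : ∀ z ∈ S + S, p * z.1 + q * z.2 = 2 * r := by
    intro z hz
    obtain ⟨c, hc, c', hc', rfl⟩ := mem_add.1 hz
    simp only [Prod.fst_add, Prod.snd_add]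
    linear_combination hline c hc + hline c' hc'
  have hT : ∀ z ∈ T, p * z.1 + q * z.2 = p * v.1 + q * v.2 + r := by
    intro z hz
    obtain ⟨c, hc, rfl⟩ := mem_image.1 hz
    simp only [Prod.fst_add, Prod.snd_add]
    linear_combination hline c hc
  have hdisj : Disjoint (S + S) T :=
    disjoint_left.2 fun z hzS hzT => hv (by linarith [hSS z hzS, hT z hzT])
  have hvv : v + v ∉ (S + S) ∪ T := by
    have hval : p * (v + v).1 + q * (v + v).2 = 2 * (p * v.1 + q * v.2) := by
      simp only [Prod.fst_add, Prod.snd_add]; ring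
    intro h
    rcases mem_union.1 h with h | h
    · exact hv (by linarith [hSS _ h])
    · exact hv (by linarith [hT _ h])
  have hsub : insert (v + v) ((S + S) ∪ T) ⊆ B + B := by
    refine insert_subset (add_mem_add hvB hvB) (union_subset ?_ ?_)
    · exact add_subset_add (erase_subset v B) (erase_subset v B)
    · exact image_subset_iff.2 fun c hc => add_mem_add hvB (mem_of_mem_erase hc)
  have := card_le_card hsub
  rwa [card_insert_of_notMem hvv, card_union_of_disjoint hdisj,
    card_image_of_injective _ (add_right_injective v)] at this

lemma card_add_erase_add_three_le (hvB : v ∈ B) (hv : ∀ b ∈ B, toLex b ≤ toLex v)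
    (hne : (B.erase v).Nonempty) (hB : ¬ LiesOnLine B) :
    #(B.erase v + B.erase v) + 3 ≤ #(B + B) := by
  set S := B.erase v
  have hlt : ∀ c ∈ S, toLex c < toLex v := fun c hc =>
    (hv c (mem_of_mem_erase hc)).lt_of_ne fun h => ne_of_mem_erase hc (toLex.injective h)
  obtain ⟨u₁, hu₁S, hu₁⟩ := exists_extremal_of_min_dirSlope hne hlt
  obtain ⟨u₂, hu₂S, hu₂⟩ := exists_extremal_of_max_dirSlope hne hlt
  have hnew₀ := add_self_notMem_add hlt
  have hnew₁ := add_notMem_add_of_extremal _ hlt (cross_self _) hu₁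
  have hnew₂ := add_notMem_add_of_extremal _ hlt (by simp [-cross_apply, cross_self]) hu₂
  have hu₁₂ : u₁ ≠ u₂ := by
    rintro rfl
    refine hB (liesOnLine_of_cross_eq_zero (v := v) (sub_ne_zero.2 (ne_of_mem_erase hu₁S))
      fun b hb => ?_)
    obtain rfl | hbv := eq_or_ne b v
    · simp
    · have hbS := mem_erase_of_ne_of_mem hbv hb
      linarith [(hu₁ b hbS).1, (hu₂ b hbS).1, AddMonoidHom.neg_apply (cross (u₁ - v)) (b - v)]
  have hsub : insert (v + v) (insert (v + u₁) (insert (v + u₂) (S + S))) ⊆ B + B := by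
    refine insert_subset (add_mem_add hvB hvB) (insert_subset ?_ (insert_subset ?_ ?_))
    · exact add_mem_add hvB (mem_of_mem_erase hu₁S)
    · exact add_mem_add hvB (mem_of_mem_erase hu₂S)
    · exact add_subset_add (erase_subset v B) (erase_subset v B)
  have hu₁v := ne_of_mem_erase hu₁S
  have hu₂v := ne_of_mem_erase hu₂S
  have := card_le_card hsub
  rwa [card_insert_of_notMem (by simp [hnew₀, hu₁v.symm, hu₂v.symm]),
    card_insert_of_notMem (by simp [hnew₁, hu₁₂]), card_insert_of_notMem hnew₂] at this

end Induction

theorem three_mul_card_le_card_add_add_three {B : Finset (ℤ × ℤ)} (hB : ¬ LiesOnLine B) :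
    3 * #B ≤ #(B + B) + 3 := by
  induction B using Finset.strongInduction with
  | H B ih =>
  obtain rfl | hBne := B.eq_empty_or_nonempty
  · simp
  obtain ⟨v, hvB, hv⟩ := B.exists_max_image toLex hBne
  have hcard : #(B.erase v) + 1 = #B := card_erase_add_one hvB
  obtain hS | hSne := (B.erase v).eq_empty_or_nonempty
  · rw [hS, card_empty] at hcard
    omega
  by_cases hS : LiesOnLine (B.erase v)
  · obtain ⟨p, q, r, hpq, hline⟩ := hS
    have hvoff : p * v.1 + q * v.2 ≠ r := fun hvl => hB ⟨p, q, r, hpq, fun b hb => by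
      obtain rfl | hbv := eq_or_ne b v
      exacts [hvl, hline b (mem_erase_of_ne_of_mem hbv hb)]⟩
    have := card_add_erase_add_card_erase_lt hvB hline hvoff
    have := cauchy_davenport_of_isAddTorsionFree hSne hSne
    omega
  · have := ih _ (erase_ssubset hvB) hS
    have := card_add_erase_add_three_le hvB hv hSne hB
    omega

end FreimanPlane

lemma Finset.card_add_image_prod_eq {ι : Type*} {I : Finset ι} {a x : ι → ℤ}
    (hx : ∀ i ∈ I, ∀ j ∈ I, ∀ r ∈ I, ∀ t ∈ I, a j - a i = a r - a t → x j - x i = x r - x t) :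
    #(I.image (fun i => (a i, x i)) + I.image (fun i => (a i, x i))) =
      #(I.image a + I.image a) := by
  have hfst : (I.image (fun i => (a i, x i)) + I.image (fun i => (a i, x i))).image Prod.fst =
      I.image a + I.image a := by
    rw [← AddMonoidHom.coe_fst, image_add, image_image]
    rfl
  rw [← hfst, card_image_of_injOn]
  rintro _ hz _ hw hzw
  obtain ⟨_, hzi, _, hzj, rfl⟩ := mem_add.1 (mem_coe.1 hz)
  obtain ⟨_, hwk, _, hwl, rfl⟩ := mem_add.1 (mem_coe.1 hw)
  obtain ⟨i, hi, rfl⟩ := mem_image.1 hzi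
  obtain ⟨j, hj, rfl⟩ := mem_image.1 hzj
  obtain ⟨k, hk, rfl⟩ := mem_image.1 hwk
  obtain ⟨l, hl, rfl⟩ := mem_image.1 hwl
  simp only [Prod.fst_add] at hzw
  have := hx k hk i hi l hl j hj (by linarith)
  exact Prod.ext hzw (by simp only [Prod.snd_add]; linarith)

lemma exists_eq_mul_add_of_line {ι : Type*} {I : Finset ι} {a x : ι → ℤ} {i₀ : ι} (hi₀ : i₀ ∈ I)
    (ha₀ : a i₀ = 0) (hgcd : I.gcd a = 1) {p q r : ℤ} (hpq : (p, q) ≠ 0)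
    (hline : ∀ i ∈ I, p * a i + q * x i = r) : ∃ X Y : ℤ, ∀ i ∈ I, x i = a i * X + Y := by
  have hdiv : ∀ i ∈ I, p * a i = q * (x i₀ - x i) := fun i hi => by
    linear_combination hline i hi - hline i₀ hi₀ + p * ha₀
  have hqp : q ∣ p := by
    have : q ∣ I.gcd (fun i => p * a i) := Finset.dvd_gcd fun i hi => ⟨_, hdiv i hi⟩
    rwa [Finset.gcd_mul_left, hgcd, mul_one, dvd_normalize_iff] at this
  obtain ⟨k, rfl⟩ := hqp
  have hq : q ≠ 0 := by
    rintro rfl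
    simp at hpq
  refine ⟨-k, x i₀, fun i hi => ?_⟩
  have : k * a i = x i₀ - x i := mul_left_cancel₀ hq (by linear_combination hdiv i hi)
  linear_combination this

open FreimanPlane in
theorem freiman_hom_is_affine_general (s : ℕ) (hs : 6 ≤ s)
    (a : ℕ → ℤ) (ha0 : a 0 = 0)
    (hinj : ∀ i < s, ∀ j < s, a i = a j → i = j)
    (hgcd : (Finset.range s).gcd a = 1)
    (x : ℕ → ℤ)
    (hfrei : ∀ i < s, ∀ j < s, ∀ r < s, ∀ t < s,
      a j - a i = a r - a t → x j - x i = x r - x t)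
    (A : Finset ℤ) (hA : A = (Finset.range s).image a)
    (hdbl : 2 * (A + A).card < 5 * s) :
    ∃ X Y : ℤ, ∀ i < s, x i = a i * X + Y := by
  set B := (range s).image fun i => (a i, x i)
  have hBcard : #B = s := by
    rw [card_image_of_injOn fun i hi j hj hij =>
      hinj i (mem_range.1 hi) j (mem_range.1 hj) (congrArg Prod.fst hij), card_range]
  have hBB : #(B + B) = #(A + A) := hA ▸ card_add_image_prod_eq fun i hi j hj r hr t ht =>
    hfrei i (mem_range.1 hi) j (mem_range.1 hj) r (mem_range.1 hr) t (mem_range.1 ht)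
  have hB : LiesOnLine B := by
    by_contra hB
    have := three_mul_card_le_card_add_add_three hB
    omega
  obtain ⟨p, q, r, hpq, hline⟩ := hB
  obtain ⟨X, Y, hXY⟩ := exists_eq_mul_add_of_line (mem_range.2 (by omega)) ha0 hgcd hpq
    fun i hi => hline _ (mem_image_of_mem _ hi)
  exact ⟨X, Y, fun i hi => hXY i (mem_range.2 hi)⟩

theorem freiman_hom_is_affine (s : ℕ) (hs : 6 ≤ s) (N : ℕ)
    (a : ℕ → ℤ) (ha0 : a 0 = 0)
    (hrange : ∀ i < s, a i ∈ Finset.Icc (0 : ℤ) ((N : ℤ) - 1))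
    (hinj : ∀ i < s, ∀ j < s, a i = a j → i = j)
    (hgcd : (Finset.range s).gcd a = 1)
    (x : ℕ → ℤ)
    (hfrei : ∀ i < s, ∀ j < s, ∀ r < s, ∀ t < s,
      a j - a i = a r - a t → x j - x i = x r - x t)
    (A : Finset ℤ) (hA : A = (Finset.range s).image a)
    (hdbl : 2 * (A + A).card < 5 * s) :
    ∃ X Y : ℤ, ∀ i < s, x i = a i * X + Y :=
  freiman_hom_is_affine_general s hs a ha0 hinj hgcd x hfrei A hA hdbl
end
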